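/- arXiv:2304.08236 — 2 statements merged into one kernel-verified Lean document; each statement's English description precedes it below -/
import Mathlib

section
/- Let n ≥ 2 be an integer, q > 0, and a_2, …, a_n ≥ 0 with a_n > 0. For r > 0 let E(r) > 0 be the unique solution of (1 + Σ_{k=2}^n (k a_k/2^{k−1}) E^{2(k−1)}) E = q/r², and define the Hamiltonian energy density H(r) = (1 + Σ_{k=2}^n (k a_k/2^{k−1}) E(r)^{2(k−1)}) E(r)² − (E(r)²/2 + Σ_{k=2}^n (a_k/2^k) E(r)^{2k}). Then lim_{r→∞} r⁴ H(r) = q²/2 and lim_{r→0⁺} r^{4n/(2n−1)} H(r) = (2n−1) ((q²/(2n²))^n / a_n)^{1/(2n−1)}. -/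
/-!
Put `s = E²/2` and `f(s) = s + ∑ aₖ sᵏ`. The field equation reads `f'(s) E = q/r²` and the
energy density is `H = 2 s f'(s) - f(s)`; squaring the field equation gives
`r⁴ = q² / (2 s f'(s)²)`, so both limits become limits of explicit functions of `s`.
Far from the charge `s → 0`, and `f'(s) → 1`, `H/s → 2 f'(0) - f'(0) = 1` give `r⁴ H → q²/2`.
Near the charge `s → ∞`, and the top-degree terms dominate: `f'(s) ~ n aₙ sⁿ⁻¹` and
`H ~ (2n-1) aₙ sⁿ`, so `(r⁴)^(n/(2n-1)) ~ (q²/(2n²aₙ²))^(n/(2n-1)) s⁻ⁿ` cancels the growth of `H`.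
-/

open Topology Filter Finset

theorem tendsto_sum_mul_pow_div_pow_atTop {ι : Type*} (t : Finset ι) (d : ι → ℝ) (e : ι → ℕ)
    {m : ι} (hm : m ∈ t) (he : ∀ k ∈ t, k ≠ m → e k < e m) :
    Tendsto (fun x : ℝ => (∑ k ∈ t, d k * x ^ e k) / x ^ e m) atTop (𝓝 (d m)) := by
  classical
  have hterm : ∀ k ∈ t, Tendsto (fun x : ℝ => d k * (x ^ e k / x ^ e m)) atTop
      (𝓝 (if k = m then d m else 0)) := by
    intro k hk
    split_ifs with hkm
    · subst hkm
      refine tendsto_const_nhds.congr' ?_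
      filter_upwards [eventually_gt_atTop 0] with x hx
      rw [div_self (by positivity), mul_one]
    · simpa using (tendsto_pow_div_pow_atTop_zero (he k hk hkm)).const_mul (d k)
  have hsum := tendsto_finsetSum t hterm
  rw [sum_ite_eq' t m, if_pos hm] at hsum
  simpa only [sum_div, mul_div_assoc] using hsum

section TwoMulSubOneRoot

variable {n : ℕ}

theorem pow_two_mul_sub_one_rpow_one_div (hn : 1 ≤ n) {x : ℝ} (hx : 0 ≤ x) :
    (x ^ (2 * n - 1)) ^ ((1 : ℝ) / (2 * n - 1)) = x := by
  have hcast : ((2 * n - 1 : ℕ) : ℝ) = 2 * n - 1 := by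
    rw [Nat.cast_sub (by omega)]; push_cast; ring
  rw [one_div, ← hcast, Real.pow_rpow_inv_natCast hx (by omega)]

theorem pow_two_mul_sub_one_rpow_div (hn : 1 ≤ n) {x : ℝ} (hx : 0 ≤ x) :
    (x ^ (2 * n - 1)) ^ ((n : ℝ) / (2 * n - 1)) = x ^ n := by
  rw [div_eq_mul_one_div, mul_comm (n : ℝ), Real.rpow_mul_natCast (by positivity),
    pow_two_mul_sub_one_rpow_one_div hn hx]

theorem div_sq_rpow_mul (hn : 1 ≤ n) {A b : ℝ} (hA : 0 ≤ A) (hb : 0 < b) :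
    (A / b ^ 2) ^ ((n : ℝ) / (2 * n - 1)) * b = (A ^ n / b) ^ ((1 : ℝ) / (2 * n - 1)) := by
  have h : A ^ n / b = (A / b ^ 2) ^ n * b ^ (2 * n - 1) := by
    obtain ⟨m, rfl⟩ : ∃ m, n = m + 1 := ⟨n - 1, by omega⟩
    rw [show 2 * (m + 1) - 1 = 2 * m + 1 by omega, div_pow, ← pow_mul]
    field_simp
    ring
  rw [h, Real.mul_rpow (by positivity) (by positivity), pow_two_mul_sub_one_rpow_one_div hn hb.le,
    ← Real.rpow_natCast_mul (by positivity), mul_one_div]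

end TwoMulSubOneRoot

section PolynomialModel

variable (a : ℕ → ℝ) (n : ℕ)

def lagrangian (s : ℝ) : ℝ := s + ∑ k ∈ Icc 2 n, a k * s ^ k

def lagrangianDeriv (s : ℝ) : ℝ := 1 + ∑ k ∈ Icc 2 n, k * a k * s ^ (k - 1)

/-- The energy density `f'(E²/2) E² - f(E²/2)` as a function of `s = E²/2`. -/
def energyDensity (s : ℝ) : ℝ := 2 * s * lagrangianDeriv a n s - lagrangian a n s

theorem hasDerivAt_lagrangian (s : ℝ) :
    HasDerivAt (lagrangian a n) (lagrangianDeriv a n s) s := by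
  have h : HasDerivAt (lagrangian a n) (1 + ∑ k ∈ Icc 2 n, a k * (k * s ^ (k - 1))) s :=
    (hasDerivAt_id' s).fun_add (.fun_sum fun k _ => (hasDerivAt_pow k s).const_mul (a k))
  refine h.congr_deriv ?_
  simp only [lagrangianDeriv, mul_left_comm (a _), mul_assoc]

theorem lagrangian_zero : lagrangian a n 0 = 0 := by
  rw [lagrangian, sum_eq_zero fun k hk => by
    rw [zero_pow (by have := (mem_Icc.1 hk).1; omega), mul_zero], add_zero]

theorem lagrangianDeriv_zero : lagrangianDeriv a n 0 = 1 := by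
  rw [lagrangianDeriv, sum_eq_zero fun k hk => by
    rw [zero_pow (by have := (mem_Icc.1 hk).1; omega), mul_zero], add_zero]

theorem continuous_lagrangianDeriv : Continuous (lagrangianDeriv a n) := by
  unfold lagrangianDeriv; fun_prop

theorem one_le_lagrangianDeriv {a : ℕ → ℝ} (ha : ∀ k ∈ Icc 2 n, 0 ≤ a k) {s : ℝ} (hs : 0 ≤ s) :
    1 ≤ lagrangianDeriv a n s :=
  le_add_of_nonneg_right <| sum_nonneg fun k hk => by have := ha k hk; positivity

theorem lagrangianDeriv_sq_div_two (x : ℝ) :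
    lagrangianDeriv a n (x ^ 2 / 2)
      = 1 + ∑ k ∈ Icc 2 n, ((k : ℝ) * a k / 2 ^ (k - 1)) * x ^ (2 * (k - 1)) := by
  simp only [lagrangianDeriv, div_pow, ← pow_mul]
  congr 1
  exact sum_congr rfl fun k _ => by ring

theorem lagrangian_sq_div_two (x : ℝ) :
    lagrangian a n (x ^ 2 / 2) = x ^ 2 / 2 + ∑ k ∈ Icc 2 n, (a k / 2 ^ k) * x ^ (2 * k) := by
  simp only [lagrangian, div_pow, ← pow_mul]
  congr 1
  exact sum_congr rfl fun k _ => by ring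

theorem energyDensity_sq_div_two (x : ℝ) :
    energyDensity a n (x ^ 2 / 2)
      = (1 + ∑ k ∈ Icc 2 n, ((k : ℝ) * a k / 2 ^ (k - 1)) * x ^ (2 * (k - 1))) * x ^ 2
        - (x ^ 2 / 2 + ∑ k ∈ Icc 2 n, (a k / 2 ^ k) * x ^ (2 * k)) := by
  rw [energyDensity, lagrangianDeriv_sq_div_two, lagrangian_sq_div_two]
  ring

theorem tendsto_lagrangianDeriv_nhdsGT_zero :
    Tendsto (lagrangianDeriv a n) (𝓝[>] 0) (𝓝 1) := by
  simpa [lagrangianDeriv_zero] using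
    ((continuous_lagrangianDeriv a n).tendsto 0).mono_left nhdsWithin_le_nhds

theorem tendsto_lagrangian_div_self :
    Tendsto (fun s => lagrangian a n s / s) (𝓝[>] 0) (𝓝 1) := by
  simpa [lagrangian_zero, lagrangianDeriv_zero, div_eq_inv_mul] using
    (hasDerivAt_lagrangian a n 0).tendsto_slope_zero_right

theorem tendsto_energyDensity_div_self :
    Tendsto (fun s => energyDensity a n s / s) (𝓝[>] 0) (𝓝 1) := by
  have h := ((tendsto_lagrangianDeriv_nhdsGT_zero a n).const_mul 2).sub
    (tendsto_lagrangian_div_self a n)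
  norm_num at h
  refine h.congr' ?_
  filter_upwards [self_mem_nhdsWithin] with s (hs : 0 < s)
  field_simp
  rw [energyDensity]
  ring

/-- For the field of a point charge, `q ^ 2 / (2 * s * f'(s) ^ 2)` is `r ^ 4` at `s = E(r)²/2`. -/
theorem tendsto_energy_nhdsGT_zero (q : ℝ) :
    Tendsto (fun s => q ^ 2 / (2 * s * lagrangianDeriv a n s ^ 2) * energyDensity a n s)
      (𝓝[>] 0) (𝓝 (q ^ 2 / 2)) := by
  have h := (tendsto_const_nhds (x := q ^ 2)).div
    (((tendsto_lagrangianDeriv_nhdsGT_zero a n).pow 2).const_mul 2) (by norm_num)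
    |>.mul (tendsto_energyDensity_div_self a n)
  norm_num at h
  refine h.congr' ?_
  filter_upwards [self_mem_nhdsWithin] with s (hs : 0 < s)
  field_simp

variable {n}

theorem tendsto_lagrangian_div_pow_atTop (hn : 2 ≤ n) :
    Tendsto (fun s => lagrangian a n s / s ^ n) atTop (𝓝 (a n)) := by
  have h := (tendsto_pow_div_pow_atTop_zero (by omega : 1 < n)).add
    (tendsto_sum_mul_pow_div_pow_atTop (Icc 2 n) a id (mem_Icc.2 ⟨hn, le_rfl⟩)
      fun k hk hkn => lt_of_le_of_ne (mem_Icc.1 hk).2 hkn)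
  simpa [lagrangian, add_div] using h

theorem tendsto_lagrangianDeriv_div_pow_atTop (hn : 2 ≤ n) :
    Tendsto (fun s => lagrangianDeriv a n s / s ^ (n - 1)) atTop (𝓝 (n * a n)) := by
  have h := (tendsto_pow_div_pow_atTop_zero (by omega : 0 < n - 1)).add
    (tendsto_sum_mul_pow_div_pow_atTop (Icc 2 n) (fun k => k * a k) (· - 1)
      (mem_Icc.2 ⟨hn, le_rfl⟩) fun k hk hkn =>
        Nat.sub_lt_sub_right (by have := (mem_Icc.1 hk).1; omega)
          (lt_of_le_of_ne (mem_Icc.1 hk).2 hkn))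
  simpa [lagrangianDeriv, add_div] using h

theorem tendsto_energyDensity_div_pow_atTop (hn : 2 ≤ n) :
    Tendsto (fun s => energyDensity a n s / s ^ n) atTop (𝓝 ((2 * n - 1) * a n)) := by
  have h := ((tendsto_lagrangianDeriv_div_pow_atTop a hn).const_mul 2).sub
    (tendsto_lagrangian_div_pow_atTop a hn)
  rw [show 2 * (n * a n) - a n = (2 * n - 1) * a n by ring] at h
  refine h.congr' ?_
  filter_upwards [eventually_gt_atTop 0] with s hs
  rw [energyDensity, show s ^ n = s ^ (n - 1) * s by rw [← pow_succ]; congr 1; omega]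
  field_simp

theorem tendsto_energy_atTop (hn : 2 ≤ n) (han : 0 < a n) (q : ℝ) :
    Tendsto (fun s => (q ^ 2 / (2 * s * lagrangianDeriv a n s ^ 2)) ^ ((n : ℝ) / (2 * n - 1)) *
        energyDensity a n s) atTop
      (𝓝 ((2 * n - 1) * ((q ^ 2 / (2 * n ^ 2)) ^ n / a n) ^ ((1 : ℝ) / (2 * n - 1)))) := by
  have hn0 : (0 : ℝ) < n := by positivity
  have hD : (0 : ℝ) < 2 * n - 1 := by
    have : (2 : ℝ) ≤ n := by exact_mod_cast hn
    linarith
  have h := ((tendsto_const_nhds (x := q ^ 2)).div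
    (((tendsto_lagrangianDeriv_div_pow_atTop a hn).pow 2).const_mul 2) (by positivity)
    |>.rpow_const (Or.inr (by positivity : (0 : ℝ) ≤ n / (2 * n - 1)))).mul
    (tendsto_energyDensity_div_pow_atTop a hn)
  have hlim : (q ^ 2 / (2 * (n * a n) ^ 2)) ^ ((n : ℝ) / (2 * n - 1)) * ((2 * n - 1) * a n)
      = (2 * n - 1) * ((q ^ 2 / (2 * n ^ 2)) ^ n / a n) ^ ((1 : ℝ) / (2 * n - 1)) := by
    rw [mul_left_comm, ← div_sq_rpow_mul (by omega) (by positivity) han]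
    ring_nf
  rw [hlim] at h
  refine h.congr' ?_
  filter_upwards [eventually_gt_atTop 0] with s hs
  have hsplit : q ^ 2 / (2 * s * lagrangianDeriv a n s ^ 2)
      = q ^ 2 / (2 * (lagrangianDeriv a n s / s ^ (n - 1)) ^ 2) / s ^ (2 * n - 1) := by
    rw [show s ^ (2 * n - 1) = s * (s ^ (n - 1)) ^ 2 by rw [← pow_mul, ← pow_succ']; congr 1; omega]
    field_simp
  simp only [Pi.div_apply]
  conv_rhs => rw [hsplit, Real.div_rpow (by positivity) (by positivity),
    pow_two_mul_sub_one_rpow_div (by omega) hs.le]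
  field_simp

end PolynomialModel

section PointCharge

variable {g E : ℝ → ℝ} {q : ℝ}

theorem tendsto_nhds_zero_of_mul_eq_div_sq (hg : ∀ x, 0 ≤ x → 1 ≤ g x)
    (hE : ∀ r, 0 < r → 0 < E r) (h : ∀ r, 0 < r → g (E r) * E r = q / r ^ 2) :
    Tendsto E atTop (𝓝 0) := by
  refine squeeze_zero' ?_ ?_
    ((tendsto_const_nhds (x := q)).div_atTop (tendsto_pow_atTop two_ne_zero))
  · filter_upwards [eventually_gt_atTop 0] with r hr using (hE r hr).le
  · filter_upwards [eventually_gt_atTop 0] with r hr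
    rw [← h r hr]
    exact le_mul_of_one_le_left (hE r hr).le (hg _ (hE r hr).le)

theorem tendsto_atTop_of_mul_eq_div_sq (hq : 0 < q) (hg : Continuous g)
    (hE : ∀ r, 0 < r → 0 ≤ E r) (h : ∀ r, 0 < r → g (E r) * E r = q / r ^ 2) :
    Tendsto E (𝓝[>] 0) atTop := by
  rw [tendsto_atTop]
  intro C
  obtain ⟨M, hM⟩ :=
    (isCompact_Icc (a := (0 : ℝ)) (b := C)).bddAbove_image (hg.mul continuous_id).continuousOn
  have hblowup : Tendsto (fun r : ℝ => q / r ^ 2) (𝓝[>] 0) atTop := by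
    simpa [div_eq_mul_inv] using
      ((tendsto_pow_atTop two_ne_zero).comp tendsto_inv_nhdsGT_zero).const_mul_atTop hq
  filter_upwards [hblowup.eventually_gt_atTop M, self_mem_nhdsWithin] with r hr (hr0 : 0 < r)
  by_contra! hEC
  have hle := hM ⟨E r, ⟨hE r hr0, hEC.le⟩, rfl⟩
  rw [Pi.mul_apply, id, h r hr0] at hle
  linarith

theorem pow_four_eq_of_mul_eq_div_sq {r x y : ℝ} (hr : 0 < r) (hq : q ≠ 0)
    (h : y * x = q / r ^ 2) : r ^ 4 = q ^ 2 / (2 * (x ^ 2 / 2) * y ^ 2) := by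
  rw [show 2 * (x ^ 2 / 2) * y ^ 2 = (q / r ^ 2) ^ 2 by rw [← h]; ring]
  field_simp

end PointCharge

/-- Asymptotics of the Hamiltonian energy density of an electric point charge in the
polynomial model: `H(r) ~ q²/(2r⁴)` at infinity and
`H(r) ~ (2n−1)((q²/(2n²))ⁿ/a_n)^{1/(2n−1)} r^{-4n/(2n−1)}` at the origin. -/
theorem stmt3 (n : ℕ) (hn : 2 ≤ n) (q : ℝ) (hq : 0 < q)
    (a : ℕ → ℝ) (ha : ∀ k, 2 ≤ k → k ≤ n → 0 ≤ a k) (han : 0 < a n)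
    (E : ℝ → ℝ) (hE : ∀ r, 0 < r → 0 < E r)
    (heq : ∀ r, 0 < r →
      (1 + ∑ k ∈ Finset.Icc 2 n, ((k : ℝ) * a k / 2 ^ (k - 1)) * E r ^ (2 * (k - 1))) * E r
        = q / r ^ 2)
    (H : ℝ → ℝ)
    (hH : ∀ r, 0 < r → H r =
      (1 + ∑ k ∈ Finset.Icc 2 n, ((k : ℝ) * a k / 2 ^ (k - 1)) * E r ^ (2 * (k - 1))) * E r ^ 2
        - (E r ^ 2 / 2 + ∑ k ∈ Finset.Icc 2 n, (a k / 2 ^ k) * E r ^ (2 * k))) :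
    Tendsto (fun r => r ^ 4 * H r) atTop (𝓝 (q ^ 2 / 2)) ∧
    Tendsto (fun r => r ^ ((4 * (n : ℝ)) / (2 * (n : ℝ) - 1)) * H r) (𝓝[>] (0 : ℝ))
      (𝓝 ((2 * (n : ℝ) - 1) *
        ((q ^ 2 / (2 * (n : ℝ) ^ 2)) ^ n / a n) ^ ((1 : ℝ) / (2 * (n : ℝ) - 1)))) := by
  set s : ℝ → ℝ := fun r => E r ^ 2 / 2
  have hfield : ∀ r, 0 < r → lagrangianDeriv a n (s r) * E r = q / r ^ 2 := fun r hr => by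
    rw [lagrangianDeriv_sq_div_two]; exact heq r hr
  have hHs : ∀ r, 0 < r → H r = energyDensity a n (s r) := fun r hr => by
    rw [hH r hr, energyDensity_sq_div_two]
  have hr4 : ∀ r, 0 < r → r ^ 4 = q ^ 2 / (2 * s r * lagrangianDeriv a n (s r) ^ 2) :=
    fun r hr => pow_four_eq_of_mul_eq_div_sq hr hq.ne' (hfield r hr)
  have hE0 := tendsto_nhds_zero_of_mul_eq_div_sq (g := fun x => lagrangianDeriv a n (x ^ 2 / 2))
    (fun x _ => one_le_lagrangianDeriv n (fun k hk => ha k (mem_Icc.1 hk).1 (mem_Icc.1 hk).2)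
      (by positivity)) hE hfield
  have hEtop := tendsto_atTop_of_mul_eq_div_sq (g := fun x => lagrangianDeriv a n (x ^ 2 / 2)) hq
    ((continuous_lagrangianDeriv a n).comp (by fun_prop)) (fun r hr => (hE r hr).le) hfield
  have hs0 : Tendsto s atTop (𝓝[>] 0) := tendsto_nhdsWithin_iff.2
    ⟨by simpa using (hE0.pow 2).div_const 2,
      (eventually_gt_atTop 0).mono fun r hr => show 0 < E r ^ 2 / 2 by have := hE r hr; positivity⟩
  have hsTop : Tendsto s (𝓝[>] 0) atTop :=
    ((tendsto_pow_atTop two_ne_zero).comp hEtop).atTop_div_const two_pos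
  constructor
  · refine ((tendsto_energy_nhdsGT_zero a n q).comp hs0).congr' ?_
    filter_upwards [eventually_gt_atTop 0] with r hr
    rw [Function.comp_apply, ← hr4 r hr, hHs r hr]
  · refine ((tendsto_energy_atTop a hn han q).comp hsTop).congr' ?_
    filter_upwards [self_mem_nhdsWithin] with r (hr : 0 < r)
    rw [Function.comp_apply, ← hr4 r hr, hHs r hr, ← Real.rpow_natCast_mul hr.le]
    push_cast
    ring_nf
end

section
/- Let β > 0, G > 0, g > 0, and define F(r) = ∫₀^r e^{−1/ρ⁴} ρ² dρ and the metric factor A(r) = 1 − (8πG/(3β)) r² + (2^{9/4} π G g^{3/2} / (β^{1/4} r)) · F(2^{1/4} r / (β^{1/4} g^{1/2})) for r > 0. Then the Kretschmann scalar K(r) = ((r² A''(r))² + 4 (r A'(r))² + 4 (A(r) − 1)²) / r⁴ satisfies lim_{r→0⁺} K(r) = 512 π² G² / (3 β²). In particular the center r = 0 is a regular point of the curvature: the magnetically charged black hole of the exponential model is free of curvature singularity. -/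
/-!
The integrand `e^{-1/ρ⁴} ρ²` of `F` vanishes to infinite order at `0`, so the magnetic term of `A`,
a multiple of `F(a r) / r`, is `o(r²)` with first derivative `o(r)` and second derivative `o(1)` as
`r → 0⁺`. Near the centre `A` therefore agrees to second order with the de Sitter factor
`1 - c r²`, `c = 8πG/(3β)`, and `K` tends to the de Sitter value `24 c² = 512π²G²/(3β²)`.
-/

open Topology Filter Real

theorem HasDerivAt.comp_mul_div_pow {φ : ℝ → ℝ} {φ' a r : ℝ} (n : ℕ)
    (hφ : HasDerivAt φ φ' (a * r)) (hr : r ≠ 0) :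
    HasDerivAt (fun s => φ (a * s) / s ^ n)
      (a * (φ' / r ^ n) - n * (φ (a * r) / r ^ (n + 1))) r := by
  refine ((hφ.comp r ((hasDerivAt_id r).const_mul a)).fun_div (hasDerivAt_pow n r)
    (pow_ne_zero n hr)).congr_deriv ?_
  cases n with
  | zero => simp [mul_comm]
  | succ m =>
    simp only [Function.comp_apply, Nat.add_sub_cancel]
    field_simp
    push_cast
    ring

theorem Filter.Tendsto.comp_mul_div_pow {φ : ℝ → ℝ} {a : ℝ} {n : ℕ}
    (hφ : Tendsto (fun x => φ x / x ^ n) (𝓝[>] 0) (𝓝 0)) (ha : 0 < a) :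
    Tendsto (fun r => φ (a * r) / r ^ n) (𝓝[>] 0) (𝓝 0) := by
  have hmul : Tendsto (a * ·) (𝓝[>] (0 : ℝ)) (𝓝[>] 0) := by
    simpa only [comap_mulLeft_nhdsGT_zero ha] using tendsto_comap (f := (a * ·)) (x := 𝓝[>] 0)
  have hlim := (hφ.comp hmul).const_mul (a ^ n)
  rw [mul_zero] at hlim
  refine hlim.congr' ?_
  filter_upwards [self_mem_nhdsWithin] with r (hr : 0 < r)
  simp only [Function.comp_apply, mul_pow]
  field_simp

noncomputable def kretschmann (A : ℝ → ℝ) (r : ℝ) : ℝ :=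
  ((r ^ 2 * deriv (deriv A) r) ^ 2 + 4 * (r * deriv A r) ^ 2 + 4 * (A r - 1) ^ 2) / r ^ 4

theorem tendsto_kretschmann_of_eq_deSitter_add {A h h' h'' : ℝ → ℝ} (c : ℝ)
    (hA : ∀ r, 0 < r → A r = 1 - c * r ^ 2 + h r)
    (hh : ∀ r, 0 < r → HasDerivAt h (h' r) r)
    (hh' : ∀ r, 0 < r → HasDerivAt h' (h'' r) r)
    (lim₀ : Tendsto (fun r => h r / r ^ 2) (𝓝[>] 0) (𝓝 0))
    (lim₁ : Tendsto (fun r => h' r / r) (𝓝[>] 0) (𝓝 0))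
    (lim₂ : Tendsto h'' (𝓝[>] 0) (𝓝 0)) :
    Tendsto (kretschmann A) (𝓝[>] 0) (𝓝 (24 * c ^ 2)) := by
  have hA' : ∀ r, 0 < r → HasDerivAt A (-(2 * c * r) + h' r) r := by
    intro r hr
    have hS : HasDerivAt (fun s => 1 - c * s ^ 2 + h s) (-(2 * c * r) + h' r) r :=
      ((((hasDerivAt_pow 2 r).const_mul c).const_sub 1).add (hh r hr)).congr_deriv (by ring)
    refine hS.congr_of_eventuallyEq ?_
    filter_upwards [Ioi_mem_nhds hr] with s hs using hA s hs
  have hA'' : ∀ r, 0 < r → HasDerivAt (deriv A) (-(2 * c) + h'' r) r := by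
    intro r hr
    have hS : HasDerivAt (fun s => -(2 * c * s) + h' s) (-(2 * c) + h'' r) r :=
      ((hasDerivAt_id r).const_mul (2 * c)).neg.add (hh' r hr) |>.congr_deriv (by ring)
    refine hS.congr_of_eventuallyEq ?_
    filter_upwards [Ioi_mem_nhds hr] with s hs using (hA' s hs).deriv
  have hK : (fun r => (-(2 * c) + h'' r) ^ 2 + 4 * (-(2 * c) + h' r / r) ^ 2
      + 4 * (-c + h r / r ^ 2) ^ 2) =ᶠ[𝓝[>] 0] kretschmann A := by
    filter_upwards [self_mem_nhdsWithin] with r (hr : 0 < r)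
    rw [kretschmann, (hA'' r hr).deriv, (hA' r hr).deriv, hA r hr]
    field_simp
    ring
  have hlim := (((lim₂.const_add (-(2 * c))).pow 2).add
    (((lim₁.const_add (-(2 * c))).pow 2).const_mul 4)).add
      (((lim₀.const_add (-c)).pow 2).const_mul 4)
  convert hlim.congr' hK using 2
  ring

noncomputable def flatIntegrand (ρ : ℝ) : ℝ := exp (-1 / ρ ^ 4) * ρ ^ 2

noncomputable def flatIntegral (x : ℝ) : ℝ := ∫ ρ in (0 : ℝ)..x, flatIntegrand ρ

-- At `ρ = 0` the junk value `-1 / 0 = 0` gives `exp 0 = 1`, but the factor `ρ ^ 2` still vanishes.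
theorem flatIntegrand_eq_expNegInvGlue (ρ : ℝ) :
    flatIntegrand ρ = expNegInvGlue (ρ ^ 4) * ρ ^ 2 := by
  rcases eq_or_ne ρ 0 with rfl | hρ
  · simp [flatIntegrand]
  · rw [flatIntegrand, expNegInvGlue, if_neg (not_le.mpr (by positivity)), neg_div, one_div]

theorem continuous_flatIntegrand : Continuous flatIntegrand := by
  rw [funext flatIntegrand_eq_expNegInvGlue]
  exact ((expNegInvGlue.contDiff (n := 0)).continuous.comp (continuous_pow 4)).mul
    (continuous_pow 2)

theorem hasDerivAt_flatIntegral (x : ℝ) : HasDerivAt flatIntegral (flatIntegrand x) x :=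
  (continuous_flatIntegrand.integral_hasStrictDerivAt 0 x).hasDerivAt

theorem hasDerivAt_flatIntegrand {x : ℝ} (hx : x ≠ 0) :
    HasDerivAt flatIntegrand (exp (-1 / x ^ 4) * (4 / x ^ 3 + 2 * x)) x := by
  have hinv : HasDerivAt (fun ρ : ℝ => -1 / ρ ^ 4) (4 / x ^ 5) x :=
    ((hasDerivAt_const x (-1 : ℝ)).fun_div (hasDerivAt_pow 4 x) (pow_ne_zero 4 hx)).congr_deriv
      (by field_simp; ring)
  exact (hinv.exp.fun_mul (hasDerivAt_pow 2 x)).congr_deriv (by field_simp; norm_num; ring)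

theorem flatIntegrand_le_flatIntegrand {ρ x : ℝ} (hρ : 0 < ρ) (hρx : ρ ≤ x) :
    flatIntegrand ρ ≤ flatIntegrand x := by
  simp only [flatIntegrand, neg_div]
  gcongr

theorem tendsto_inv_pow_four_nhdsGT_zero : Tendsto (fun x : ℝ => (x ^ 4)⁻¹) (𝓝[>] 0) atTop := by
  simpa only [inv_pow, Function.comp_def] using
    (tendsto_pow_atTop (α := ℝ) four_ne_zero).comp tendsto_inv_nhdsGT_zero

theorem tendsto_exp_neg_one_div_pow_four :
    Tendsto (fun x : ℝ => exp (-1 / x ^ 4)) (𝓝[>] 0) (𝓝 0) := by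
  simpa only [neg_div, one_div, Function.comp_def] using
    tendsto_exp_neg_atTop_nhds_zero.comp tendsto_inv_pow_four_nhdsGT_zero

theorem tendsto_exp_neg_one_div_pow_four_div_pow_four :
    Tendsto (fun x : ℝ => exp (-1 / x ^ 4) / x ^ 4) (𝓝[>] 0) (𝓝 0) := by
  refine ((tendsto_pow_mul_exp_neg_atTop_nhds_zero 1).comp
    tendsto_inv_pow_four_nhdsGT_zero).congr fun x => ?_
  rw [Function.comp_apply, pow_one, neg_div, one_div, div_eq_inv_mul]

theorem tendsto_flatIntegral_div_pow_three :
    Tendsto (fun x => flatIntegral x / x ^ 3) (𝓝[>] 0) (𝓝 0) := by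
  refine squeeze_zero_norm' ?_ tendsto_exp_neg_one_div_pow_four
  filter_upwards [self_mem_nhdsWithin] with x (hx : 0 < x)
  have hbound : ‖flatIntegral x‖ ≤ flatIntegrand x * |x - 0| := by
    refine intervalIntegral.norm_integral_le_of_norm_le_const fun ρ hρ => ?_
    rw [Set.uIoc_of_le hx.le] at hρ
    rw [Real.norm_of_nonneg (by unfold flatIntegrand; positivity)]
    exact flatIntegrand_le_flatIntegrand hρ.1 hρ.2
  rw [norm_div, norm_pow, Real.norm_of_nonneg hx.le, div_le_iff₀ (by positivity)]
  simpa [flatIntegrand, abs_of_pos hx, pow_succ, mul_assoc] using hbound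

theorem tendsto_flatIntegrand_div_sq :
    Tendsto (fun x => flatIntegrand x / x ^ 2) (𝓝[>] 0) (𝓝 0) := by
  refine tendsto_exp_neg_one_div_pow_four.congr' ?_
  filter_upwards [self_mem_nhdsWithin] with x (hx : 0 < x)
  rw [flatIntegrand]
  field_simp

theorem tendsto_exp_neg_one_div_pow_four_mul_div :
    Tendsto (fun x => exp (-1 / x ^ 4) * (4 / x ^ 3 + 2 * x) / x ^ 1) (𝓝[>] 0) (𝓝 0) := by
  have hlim := (tendsto_exp_neg_one_div_pow_four_div_pow_four.const_mul 4).add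
    (tendsto_exp_neg_one_div_pow_four.const_mul 2)
  rw [mul_zero, mul_zero, add_zero] at hlim
  refine hlim.congr' ?_
  filter_upwards [self_mem_nhdsWithin] with x (hx : 0 < x)
  field_simp

theorem tendsto_kretschmann_of_eq_deSitter_add_flatIntegral {A : ℝ → ℝ} {a : ℝ} (c D : ℝ)
    (ha : 0 < a) (hA : ∀ r, 0 < r → A r = 1 - c * r ^ 2 + D * (flatIntegral (a * r) / r)) :
    Tendsto (kretschmann A) (𝓝[>] 0) (𝓝 (24 * c ^ 2)) := by
  have lim₀ := tendsto_flatIntegral_div_pow_three.comp_mul_div_pow ha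
  have lim₁ := tendsto_flatIntegrand_div_sq.comp_mul_div_pow ha
  have lim₂ := tendsto_exp_neg_one_div_pow_four_mul_div.comp_mul_div_pow ha
  refine tendsto_kretschmann_of_eq_deSitter_add c hA
    (h' := fun r => D * (a * (flatIntegrand (a * r) / r) - flatIntegral (a * r) / r ^ 2))
    (h'' := fun r => D * (a * (a * (exp (-1 / (a * r) ^ 4) * (4 / (a * r) ^ 3 + 2 * (a * r)) / r ^ 1)
      - flatIntegrand (a * r) / r ^ 2) - (a * (flatIntegrand (a * r) / r ^ 2)
      - 2 * (flatIntegral (a * r) / r ^ 3)))) ?_ ?_ ?_ ?_ ?_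
  · intro r hr
    simpa using ((hasDerivAt_flatIntegral (a * r)).comp_mul_div_pow 1 hr.ne').const_mul D
  · intro r hr
    simpa using ((((hasDerivAt_flatIntegrand (mul_pos ha hr).ne').comp_mul_div_pow 1
      hr.ne').const_mul a).sub ((hasDerivAt_flatIntegral (a * r)).comp_mul_div_pow 2
        hr.ne')).const_mul D
  · have hlim := lim₀.const_mul D
    rw [mul_zero] at hlim
    refine hlim.congr' ?_
    filter_upwards [self_mem_nhdsWithin] with r (hr : 0 < r)
    field_simp
  · have hlim := ((lim₁.const_mul a).sub lim₀).const_mul D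
    rw [mul_zero, sub_zero, mul_zero] at hlim
    refine hlim.congr' ?_
    filter_upwards [self_mem_nhdsWithin] with r (hr : 0 < r)
    field_simp
  · simpa using ((((lim₂.const_mul a).sub lim₁).const_mul a).sub
      ((lim₁.const_mul a).sub (lim₀.const_mul 2))).const_mul D

theorem stmt12_general (β G g : ℝ) (hβ : 0 < β) (hg : 0 < g)
    (F : ℝ → ℝ)
    (hF : ∀ r : ℝ, F r = ∫ ρ in (0 : ℝ)..r, Real.exp (-1 / ρ ^ 4) * ρ ^ 2)
    (A : ℝ → ℝ)
    (hA : ∀ r : ℝ, 0 < r → A r =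
      1 - (8 * Real.pi * G / (3 * β)) * r ^ 2 +
        ((2 : ℝ) ^ ((9 : ℝ) / 4) * Real.pi * G * g ^ ((3 : ℝ) / 2) / (β ^ ((1 : ℝ) / 4) * r)) *
          F ((2 : ℝ) ^ ((1 : ℝ) / 4) * r / (β ^ ((1 : ℝ) / 4) * g ^ ((1 : ℝ) / 2))))
    (K : ℝ → ℝ)
    (hK : ∀ r : ℝ, 0 < r → K r =
      ((r ^ 2 * deriv (deriv A) r) ^ 2 + 4 * (r * deriv A r) ^ 2 + 4 * (A r - 1) ^ 2) / r ^ 4) :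
    Tendsto K (𝓝[>] (0 : ℝ)) (𝓝 (512 * Real.pi ^ 2 * G ^ 2 / (3 * β ^ 2))) := by
  have hFeq : F = flatIntegral := funext hF
  set a := (2 : ℝ) ^ ((1 : ℝ) / 4) / (β ^ ((1 : ℝ) / 4) * g ^ ((1 : ℝ) / 2))
  have ha : 0 < a := by positivity
  have hA' : ∀ r, 0 < r → A r = 1 - 8 * π * G / (3 * β) * r ^ 2 +
      2 ^ ((9 : ℝ) / 4) * π * G * g ^ ((3 : ℝ) / 2) / β ^ ((1 : ℝ) / 4) *
        (flatIntegral (a * r) / r) := by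
    intro r hr
    rw [hA r hr, hFeq,
      show 2 ^ ((1 : ℝ) / 4) * r / (β ^ ((1 : ℝ) / 4) * g ^ ((1 : ℝ) / 2)) = a * r by ring]
    field_simp
  have hK' : kretschmann A =ᶠ[𝓝[>] 0] K := by
    filter_upwards [self_mem_nhdsWithin] with r (hr : 0 < r) using (hK r hr).symm
  convert (tendsto_kretschmann_of_eq_deSitter_add_flatIntegral _ _ ha hA').congr' hK' using 2
  field_simp
  ring

/-- The magnetically charged black hole of the exponential model is free of curvature
singularity: with `F(r) = ∫₀^r e^{−1/ρ⁴} ρ² dρ` and metric factor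
`A(r) = 1 − (8πG/(3β)) r² + (2^{9/4} πG g^{3/2}/(β^{1/4} r)) F(2^{1/4} r/(β^{1/4} g^{1/2}))`,
the Kretschmann scalar satisfies `K(r) → 512π²G²/(3β²)` as `r → 0⁺`. -/
theorem stmt12 (β G g : ℝ) (hβ : 0 < β) (hG : 0 < G) (hg : 0 < g)
    (F : ℝ → ℝ)
    (hF : ∀ r : ℝ, F r = ∫ ρ in (0 : ℝ)..r, Real.exp (-1 / ρ ^ 4) * ρ ^ 2)
    (A : ℝ → ℝ)
    (hA : ∀ r : ℝ, 0 < r → A r =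
      1 - (8 * Real.pi * G / (3 * β)) * r ^ 2 +
        ((2 : ℝ) ^ ((9 : ℝ) / 4) * Real.pi * G * g ^ ((3 : ℝ) / 2) / (β ^ ((1 : ℝ) / 4) * r)) *
          F ((2 : ℝ) ^ ((1 : ℝ) / 4) * r / (β ^ ((1 : ℝ) / 4) * g ^ ((1 : ℝ) / 2))))
    (K : ℝ → ℝ)
    (hK : ∀ r : ℝ, 0 < r → K r =
      ((r ^ 2 * deriv (deriv A) r) ^ 2 + 4 * (r * deriv A r) ^ 2 + 4 * (A r - 1) ^ 2) / r ^ 4) :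
    Tendsto K (𝓝[>] (0 : ℝ)) (𝓝 (512 * Real.pi ^ 2 * G ^ 2 / (3 * β ^ 2))) :=
  stmt12_general β G g hβ hg F hF A hA K hK
end
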